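/- arXiv:2602.02572 — 3 statements merged into one kernel-verified Lean document; each statement's English description precedes it below -/
import Mathlib

section
/- Let Y be finite, ρ_base full support, r_U : Y → ℝ, β > 0, B > 0, k = exp(B/β). The function F(m) = Σ_y ρ_base(y)·w_y(m)·(r_U(y) − m), with w_y(m) = k for r_U(y) ≥ m and 1 otherwise, has exactly one root m* ∈ ℝ, and moreover min_y r_U(y) ≤ m* ≤ max_y r_U(y). -/
theorem stmt5 {Y : Type*} [Fintype Y] [Nonempty Y]
    (ρbase : Y → ℝ) (hpos : ∀ y, 0 < ρbase y) (hsum : ∑ y, ρbase y = 1)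
    (rU : Y → ℝ) (β B : ℝ) (hβ : 0 < β) (hB : 0 < B)
    (k : ℝ) (hk : k = Real.exp (B / β))
    (F : ℝ → ℝ)
    (hF : ∀ m, F m = ∑ y, ρbase y * (if m ≤ rU y then k else 1) * (rU y - m)) :
    ∃ mstar : ℝ, F mstar = 0 ∧ (∀ m, F m = 0 → m = mstar) ∧
      Finset.univ.inf' Finset.univ_nonempty rU ≤ mstar ∧
      mstar ≤ Finset.univ.sup' Finset.univ_nonempty rU := by
  have hk1 : 1 < k := by
    rw [hk]
    have h0 : 0 < B / β := div_pos hB hβ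
    calc 1 = Real.exp 0 := by simp
    _ < Real.exp (B / β) := Real.exp_lt_exp.mpr h0
  have hk0 : 0 < k := by linarith
  set G : ℝ → ℝ := fun m => ∑ y, ρbase y * (k * max (rU y - m) 0 + min (rU y - m) 0)
    with hG
  have hFG : ∀ m, F m = G m := by
    intro m
    rw [hF, hG]
    refine Finset.sum_congr rfl fun y _ => ?_
    by_cases h : m ≤ rU y
    · rw [if_pos h, max_eq_left (by linarith), min_eq_right (by linarith)]
      ring
    · rw [if_neg h, max_eq_right (by linarith), min_eq_left (by linarith)]
      ring
  have hanti : StrictAnti G := by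
    intro a b hab
    simp only [hG]
    apply Finset.sum_lt_sum_of_nonempty Finset.univ_nonempty
    intro y _
    apply mul_lt_mul_of_pos_left _ (hpos y)
    rcases le_or_gt b (rU y) with h1 | h1
    · rw [max_eq_left (by linarith : (0:ℝ) ≤ rU y - a),
        min_eq_right (by linarith : (0:ℝ) ≤ rU y - a),
        max_eq_left (by linarith : (0:ℝ) ≤ rU y - b),
        min_eq_right (by linarith : (0:ℝ) ≤ rU y - b)]
      nlinarith
    · rw [max_eq_right (by linarith : rU y - b ≤ 0),
        min_eq_left (by linarith : rU y - b ≤ 0)]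
      rcases le_or_gt a (rU y) with h2 | h2
      · rw [max_eq_left (by linarith : (0:ℝ) ≤ rU y - a),
          min_eq_right (by linarith : (0:ℝ) ≤ rU y - a)]
        nlinarith
      · rw [max_eq_right (by linarith : rU y - a ≤ 0),
          min_eq_left (by linarith : rU y - a ≤ 0)]
        nlinarith
  have hcont : Continuous G := by
    rw [hG]
    apply continuous_finset_sum
    intro y _
    exact continuous_const.mul
      ((continuous_const.mul (((continuous_const.sub continuous_id).max continuous_const))).add
        ((continuous_const.sub continuous_id).min continuous_const))
  set a := Finset.univ.inf' Finset.univ_nonempty rU with ha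
  set b := Finset.univ.sup' Finset.univ_nonempty rU with hb
  have hab : a ≤ b := by
    obtain ⟨y0⟩ := (inferInstance : Nonempty Y)
    exact le_trans (Finset.inf'_le _ (Finset.mem_univ y0))
      (Finset.le_sup' _ (Finset.mem_univ y0))
  have hGa : 0 ≤ G a := by
    rw [← hFG, hF]
    apply Finset.sum_nonneg
    intro y _
    have h1 : a ≤ rU y := Finset.inf'_le _ (Finset.mem_univ y)
    rw [if_pos h1]
    exact mul_nonneg (mul_nonneg (hpos y).le hk0.le) (by linarith)
  have hGb : G b ≤ 0 := by
    rw [← hFG, hF]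
    apply Finset.sum_nonpos
    intro y _
    have h1 : rU y ≤ b := Finset.le_sup' _ (Finset.mem_univ y)
    by_cases h : b ≤ rU y
    · rw [if_pos h]
      have : rU y = b := le_antisymm h1 h
      rw [this]
      simp
    · rw [if_neg h]
      have := hpos y
      nlinarith
  have hsub := intermediate_value_Icc' hab hcont.continuousOn
  have h0mem : (0:ℝ) ∈ Set.Icc (G b) (G a) := ⟨hGb, hGa⟩
  obtain ⟨mstar, hmem, hGm⟩ := hsub h0mem
  refine ⟨mstar, by rw [hFG]; exact hGm, ?_, hmem.1, hmem.2⟩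
  intro m hm
  apply hanti.injective
  rw [hGm, ← hFG]
  exact hm
end

section
/- Let Y be finite with ρ_base full support, r_U : Y → ℝ, β > 0, B > 0. Suppose r : Y → [0,B] maximizes E_{y∼ρ_r}[r_U(y)] over all reward functions with values in [0,B], where ρ_r(y) = ρ_base(y)·exp(r(y)/β)/Z_r. Then, writing m = E_{y∼ρ_r}[r_U(y)], every y with r_U(y) > m satisfies r(y) = B, and every y with r_U(y) < m satisfies r(y) = 0. -/
theorem stmt7 {Y : Type*} [Fintype Y] [Nonempty Y]
    (ρbase : Y → ℝ) (hpos : ∀ y, 0 < ρbase y) (hsum : ∑ y, ρbase y = 1)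
    (rU : Y → ℝ) (β B : ℝ) (hβ : 0 < β) (hB : 0 < B)
    (tilt : (Y → ℝ) → Y → ℝ)
    (htilt : ∀ r y, tilt r y = ρbase y * Real.exp (r y / β) /
      ∑ y', ρbase y' * Real.exp (r y' / β))
    (r : Y → ℝ) (hr : ∀ y, r y ∈ Set.Icc 0 B)
    (hmax : ∀ r' : Y → ℝ, (∀ y, r' y ∈ Set.Icc 0 B) →
      (∑ y, tilt r' y * rU y) ≤ ∑ y, tilt r y * rU y)
    (m : ℝ) (hm : m = ∑ y, tilt r y * rU y) :
    (∀ y, m < rU y → r y = B) ∧ (∀ y, rU y < m → r y = 0) := by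
  classical
  set Z := ∑ y, ρbase y * Real.exp (r y / β) with hZdef
  have hZpos : 0 < Z :=
    Finset.sum_pos (fun y _ => mul_pos (hpos y) (Real.exp_pos _)) Finset.univ_nonempty
  set N := ∑ y, ρbase y * Real.exp (r y / β) * rU y with hNdef
  have hJ : ∑ y, tilt r y * rU y = N / Z := by
    rw [hNdef, Finset.sum_div]
    exact Finset.sum_congr rfl fun y _ => by rw [htilt] ; ring
  have hmN : m * Z = N := by
    rw [hm, hJ]; field_simp
  have key : ∀ y0 : Y, ∀ v : ℝ, v ∈ Set.Icc (0:ℝ) B →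
      0 < (Real.exp (v / β) - Real.exp (r y0 / β)) * (rU y0 - m) → False := by
    intro y0 v hv hprod
    set r' := Function.update r y0 v with hr'def
    have hr' : ∀ y, r' y ∈ Set.Icc (0:ℝ) B := by
      intro y
      by_cases h : y = y0
      · subst h; simpa [hr'def] using hv
      · simpa [hr'def, Function.update_of_ne h] using hr y
    set d := ρbase y0 * (Real.exp (v / β) - Real.exp (r y0 / β)) with hddef
    set Z' := ∑ y, ρbase y * Real.exp (r' y / β) with hZ'def
    set N' := ∑ y, ρbase y * Real.exp (r' y / β) * rU y with hN'def
    have hZ'pos : 0 < Z' :=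
      Finset.sum_pos (fun y _ => mul_pos (hpos y) (Real.exp_pos _)) Finset.univ_nonempty
    have hZ' : Z' = Z + d := by
      have h : Z' - Z = d := by
        rw [hZ'def, hZdef, ← Finset.sum_sub_distrib,
          Finset.sum_eq_single y0]
        · simp only [hr'def, Function.update_self, hddef]; ring
        · intro y _ hy
          simp [hr'def, Function.update_of_ne hy]
        · intro h; exact absurd (Finset.mem_univ y0) h
      linarith
    have hN' : N' = N + d * rU y0 := by
      have h : N' - N = d * rU y0 := by
        rw [hN'def, hNdef, ← Finset.sum_sub_distrib,
          Finset.sum_eq_single y0]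
        · simp only [hr'def, Function.update_self, hddef]; ring
        · intro y _ hy
          simp [hr'def, Function.update_of_ne hy]
        · intro h; exact absurd (Finset.mem_univ y0) h
      linarith
    have hJ' : ∑ y, tilt r' y * rU y = N' / Z' := by
      rw [hN'def, Finset.sum_div]
      exact Finset.sum_congr rfl fun y _ => by rw [htilt] ; ring
    have hlt : N / Z < N' / Z' := by
      rw [div_lt_div_iff₀ hZpos hZ'pos]
      have h1 : N' * Z - N * Z' =
          ρbase y0 * ((Real.exp (v / β) - Real.exp (r y0 / β)) * (rU y0 - m)) * Z := by
        rw [hN', hZ', hddef, ← hmN]; ring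
      nlinarith [mul_pos (mul_pos (hpos y0) hprod) hZpos]
    have hle := hmax r' hr'
    rw [hJ, hJ'] at hle
    linarith
  constructor
  · intro y hy
    by_contra hne
    have hltB : r y < B := lt_of_le_of_ne (hr y).2 hne
    refine key y B ⟨le_of_lt hB, le_refl B⟩ ?_
    have hdiv : r y / β < B / β := by gcongr
    have hexp : Real.exp (r y / β) < Real.exp (B / β) := Real.exp_lt_exp.mpr hdiv
    exact mul_pos (by linarith) (by linarith)
  · intro y hy
    by_contra hne
    have hlt0 : 0 < r y := lt_of_le_of_ne (hr y).1 (Ne.symm hne)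
    refine key y 0 ⟨le_refl 0, le_of_lt hB⟩ ?_
    have hdiv : (0:ℝ) / β < r y / β := by gcongr
    have hexp : Real.exp ((0:ℝ) / β) < Real.exp (r y / β) := Real.exp_lt_exp.mpr hdiv
    exact mul_pos_of_neg_of_neg (by linarith) (by linarith)
end

section
/- Let Y be finite with ρ_base full support, r_U : Y → ℝ, β > 0, B ≥ 0. Let ρ_r denote the exponential tilting of ρ_base by r/β, and for m ∈ ℝ let r_m be the hard threshold reward r_m(y) = B·1{r_U(y) ≥ m}. If m* satisfies m* = Σ_y ρ_{r_{m*}}(y)·r_U(y), then Σ_y ρ_{r_{m*}}(y)·r_U(y) ≥ Σ_y ρ_base(y)·r_U(y); i.e., the expected user utility under the optimal hard threshold policy is at least the expected utility under the base policy. -/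
theorem stmt14 {Y : Type*} [Fintype Y] [Nonempty Y]
    (ρbase : Y → ℝ) (hpos : ∀ y, 0 < ρbase y) (hsum : ∑ y, ρbase y = 1)
    (rU : Y → ℝ) (β B : ℝ) (hβ : 0 < β) (hB : 0 ≤ B)
    (rm : ℝ → Y → ℝ) (hrm : ∀ m y, rm m y = if m ≤ rU y then B else 0)
    (ρ : ℝ → Y → ℝ)
    (hρ : ∀ m y, ρ m y = ρbase y * Real.exp (rm m y / β) /
      ∑ y', ρbase y' * Real.exp (rm m y' / β))
    (mstar : ℝ) (hfix : mstar = ∑ y, ρ mstar y * rU y) :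
    (∑ y, ρbase y * rU y) ≤ ∑ y, ρ mstar y * rU y := by
  classical
  set c := Real.exp (B / β) with hc
  have hc1 : 1 ≤ c := Real.one_le_exp (by positivity)
  set w : Y → ℝ := fun y => Real.exp (rm mstar y / β) with hwdef
  have hw : ∀ y, w y = if mstar ≤ rU y then c else 1 := by
    intro y
    simp only [hwdef, hrm]
    split_ifs <;> simp [hc]
  have hwpos : ∀ y, 0 < w y := fun y => Real.exp_pos _
  set Z := ∑ y', ρbase y' * w y' with hZdef
  have hZ : 0 < Z :=
    Finset.sum_pos (fun y _ => mul_pos (hpos y) (hwpos y)) Finset.univ_nonempty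
  have hρ' : ∀ y, ρ mstar y = ρbase y * w y / Z := fun y => hρ mstar y
  -- fixed point gives: ∑ ρbase w rU = mstar * Z
  have hfix' : ∑ y, ρbase y * w y * rU y = mstar * Z := by
    have : mstar = (∑ y, ρbase y * w y * rU y) / Z := by
      rw [hfix, Finset.sum_div]
      refine Finset.sum_congr rfl fun y _ => ?_
      rw [hρ' y]; ring
    rw [this]; field_simp
  have key : ∑ y, ρbase y * w y * (rU y - mstar) = 0 := by
    have : ∑ y, ρbase y * w y * (rU y - mstar)
        = (∑ y, ρbase y * w y * rU y) - mstar * Z := by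
      rw [hZdef, Finset.mul_sum, ← Finset.sum_sub_distrib]
      refine Finset.sum_congr rfl fun y _ => by ring
    rw [this, hfix', sub_self]
  set A := Finset.univ.filter (fun y => mstar ≤ rU y) with hA
  set S := ∑ y ∈ A, ρbase y * (rU y - mstar) with hS
  have hSnonneg : 0 ≤ S := by
    refine Finset.sum_nonneg fun y hy => ?_
    have : mstar ≤ rU y := (Finset.mem_filter.mp hy).2
    have := hpos y
    nlinarith
  have hsplit : c * S + ∑ y ∈ Aᶜ, ρbase y * (rU y - mstar) = 0 := by
    rw [← key, ← Finset.sum_add_sum_compl A]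
    congr 1
    · rw [hS, Finset.mul_sum]
      refine Finset.sum_congr rfl fun y hy => ?_
      have h1 : mstar ≤ rU y := (Finset.mem_filter.mp hy).2
      rw [hw y, if_pos h1]; ring
    · refine Finset.sum_congr rfl fun y hy => ?_
      have h1 : ¬ mstar ≤ rU y := by
        simpa [hA] using (Finset.mem_compl.mp hy)
      rw [hw y, if_neg h1]; ring
  have hT : ∑ y, ρbase y * (rU y - mstar) = (1 - c) * S := by
    rw [← Finset.sum_add_sum_compl A, ← hS]
    have : ∑ y ∈ Aᶜ, ρbase y * (rU y - mstar) = -(c * S) := by linarith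
    rw [this]; ring
  have hT0 : ∑ y, ρbase y * (rU y - mstar) ≤ 0 := by
    rw [hT]; nlinarith
  have hmean : (∑ y, ρbase y * rU y) - mstar ≤ 0 := by
    have : ∑ y, ρbase y * (rU y - mstar)
        = (∑ y, ρbase y * rU y) - mstar * ∑ y, ρbase y := by
      rw [Finset.mul_sum, ← Finset.sum_sub_distrib]
      exact Finset.sum_congr rfl fun y _ => by ring
    rw [this, hsum, mul_one] at hT0
    exact hT0
  rw [← hfix]
  linarith
end
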